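/- Let A be a connected graph with at least one cycle. Then the family Q_A = { X ⊆ E(A) : A⟨X⟩ has no leaves } has a unique maximum element under inclusion, this maximum element equals the minimum element of R_A = { X ⊆ E(A) : X ≠ ∅, Δ(A⟨X⟩) = Δ(A) }, and every cycle of A is a subgraph of the induced subgraph on this edge set (the kernel ⌊A⌋). -/

import Mathlib

open scoped Classical

/-- A finite multigraph: loops and parallel edges allowed. -/
structure Multigraph where
  V : Type
  E : Type
  [fintypeV : Fintype V]
  [fintypeE : Fintype E]
  ends : E → Sym2 V

attribute [instance] Multigraph.fintypeV Multigraph.fintypeE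

namespace Multigraph

variable (G : Multigraph)

/-- Vertex support of an edge set: vertices incident to some edge of `X`. -/
noncomputable def supp (X : Finset G.E) : Finset G.V :=
  Finset.univ.filter (fun v => ∃ e ∈ X, v ∈ G.ends e)

/-- `Δ` of the subgraph induced by the edge set `X`. -/
noncomputable def delta (X : Finset G.E) : ℤ := (X.card : ℤ) - (G.supp X).card

/-- `Δ(G) = |E(G)| - |V(G)|`. -/
noncomputable def deltaG : ℤ := (Fintype.card G.E : ℤ) - (Fintype.card G.V : ℤ)

/-- Degree of `v` in the edge set `X`: loops count twice. -/
noncomputable def degIn (X : Finset G.E) (v : G.V) : ℕ :=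
  ∑ e ∈ X, (if G.ends e = s(v, v) then 2 else if v ∈ G.ends e then 1 else 0)

/-- `u` and `v` are joined by an edge of `X`. -/
def adjIn (X : Finset G.E) (u v : G.V) : Prop := ∃ e ∈ X, G.ends e = s(u, v)

/-- Reachability using only edges of `X`. -/
def reachIn (X : Finset G.E) : G.V → G.V → Prop :=
  Relation.ReflTransGen (G.adjIn X)

/-- The edge set `X` induces a connected subgraph. -/
def ConnSet (X : Finset G.E) : Prop :=
  X.Nonempty ∧ ∀ u ∈ G.supp X, ∀ v ∈ G.supp X, G.reachIn X u v

/-- Edges of the component of the subgraph `(V, X)` containing vertex `v`. -/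
noncomputable def compEdges (X : Finset G.E) (v : G.V) : Finset G.E :=
  X.filter (fun f => ∃ u ∈ G.ends f, G.reachIn X v u)

/-- Vertices of the component of `v` in the graph `(V, X)` (all vertices kept). -/
noncomputable def compVerts (X : Finset G.E) (v : G.V) : Finset G.V :=
  Finset.univ.filter (fun u => G.reachIn X v u)

/-- `C` is (the edge set of) a cycle: connected, every vertex of degree 2. -/
def IsCycleSet (C : Finset G.E) : Prop :=
  G.ConnSet C ∧ ∀ v ∈ G.supp C, G.degIn C v = 2

/-- `T` induces a tree. -/
def IsTreeSet (T : Finset G.E) : Prop := G.ConnSet T ∧ G.delta T = -1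

/-- The component of `v` in `(V, X)` is a tree (possibly a single vertex). -/
def IsTreeCompAt (X : Finset G.E) (v : G.V) : Prop :=
  (G.compEdges X v).card + 1 = (G.compVerts X v).card

/-- The number of tree components of the graph `(V, X)`. -/
noncomputable def treeCount (X : Finset G.E) : ℕ :=
  (((Finset.univ : Finset G.V).filter (fun v => G.IsTreeCompAt X v)).image
    (fun v => G.compVerts X v)).card

/-- The graph `G` has no isolated vertices. -/
def NoIso : Prop := ∀ v : G.V, ∃ e : G.E, v ∈ G.ends e

/-- The graph `G` has no leaves. -/
def NoLeaf : Prop := ∀ v : G.V, G.degIn Finset.univ v ≠ 1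

/-- The graph `G` is connected. -/
def GConn : Prop := Nonempty G.V ∧ ∀ u v : G.V, G.reachIn Finset.univ u v

/-- `G` is a bicycle: connected, leafless, with `Δ(G) = 1`. -/
def IsBicycle : Prop := G.GConn ∧ G.NoLeaf ∧ G.deltaG = 1

/-- One round of deleting all edges incident to a leaf. -/
noncomputable def pruneStep (X : Finset G.E) : Finset G.E :=
  X.filter (fun e => ∀ v ∈ G.ends e, G.degIn X v ≠ 1)

/-- Edge set obtained from `G` by repeatedly deleting leaves until none remain. -/
noncomputable def kernelSet : Finset G.E :=
  G.pruneStep^[Fintype.card G.E] Finset.univ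

/-- `Δ` of the component of `G` containing `v`. -/
noncomputable def compDelta (v : G.V) : ℤ :=
  ((G.compEdges Finset.univ v).card : ℤ) - ((G.compVerts Finset.univ v).card : ℤ)

/-- The core `[G]`: union of the kernels of the components `A` with `Δ(A) ≥ 1`. -/
noncomputable def coreSet : Finset G.E :=
  G.kernelSet.filter (fun e => ∀ v ∈ G.ends e, 1 ≤ G.compDelta v)

/-- `P` is the edge set of an `(x,y)`-path. -/
def IsPathSet (P : Finset G.E) (x y : G.V) : Prop :=
  G.ConnSet P ∧ x ≠ y ∧ x ∈ G.supp P ∧ y ∈ G.supp P ∧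
  G.degIn P x = 1 ∧ G.degIn P y = 1 ∧
  ∀ v ∈ G.supp P, v ≠ x → v ≠ y → G.degIn P v = 2

/-- `C` induces a bicycle subgraph: connected, leafless, `Δ = 1`. -/
def IsBicycleSet (C : Finset G.E) : Prop :=
  G.ConnSet C ∧ (∀ v ∈ G.supp C, G.degIn C v ≠ 1) ∧ G.delta C = 1

/-- Circuits of the `k`-circular matroid `M_k(G)`: minimal nonempty edge sets `C`
with `|C| = |V(G⟨C⟩)| + k`, i.e. `Δ(G⟨C⟩) = k`. -/
def IsCircuitSet (k : ℕ) (C : Finset G.E) : Prop :=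
  (C.Nonempty ∧ G.delta C = (k : ℤ)) ∧
  ∀ D ⊂ C, ¬ (D.Nonempty ∧ G.delta D = (k : ℤ))

/-- Independent sets of `M_k(G)`. -/
def Indep (k : ℕ) (I : Finset G.E) : Prop := ∀ C ⊆ I, ¬ G.IsCircuitSet k C

/-- Bases of `M_k(G)`: maximal independent sets. -/
def IsBase (k : ℕ) (B : Finset G.E) : Prop :=
  G.Indep k B ∧ ∀ B' : Finset G.E, G.Indep k B' → B ⊆ B' → B' = B

/-- The matroid `M_k(G)` is connected: at least two elements and every two
elements lie on a common circuit. -/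
def MConn (k : ℕ) : Prop :=
  2 ≤ Fintype.card G.E ∧
  ∀ a b : G.E, ∃ C : Finset G.E, G.IsCircuitSet k C ∧ a ∈ C ∧ b ∈ C

end Multigraph

/-!
Growing a nonempty edge set `X` along an edge that leaves it adds one edge and at most one
vertex, so by connectivity `Δ(A⟨X⟩) ≤ Δ(A)`; the inequality is strict when `X` consists of two
parts with disjoint vertex sets, since growing one part eventually closes an edge between
vertices already present. Deleting a leaf together with its edge never decreases `Δ` and never
touches a leafless subgraph, so pruning `A` down from a cycle gives a leafless `L` with
`Δ(L) = Δ(A)`. Finally let `Δ(X) = Δ(A)` and let `Y` be leafless. The edges `W` of `Y` outside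
`X` bring at most `|W|` new vertices, each of degree at least two in `W`; double counting forces
`W` to have all its ends among these new vertices, and then `X ∪ W` is split with `Δ = Δ(A)`,
which is impossible. Hence `L` is at once the largest leafless and the smallest `Δ`-maximal set.
-/

namespace Multigraph

variable {G : Multigraph}

def IsLeaflessSet (X : Finset G.E) : Prop := ∀ v ∈ G.supp X, G.degIn X v ≠ 1

noncomputable def endMult (e : G.E) (v : G.V) : ℕ :=
  if G.ends e = s(v, v) then 2 else if v ∈ G.ends e then 1 else 0

lemma degIn_eq_sum_endMult (X : Finset G.E) (v : G.V) :
    G.degIn X v = ∑ e ∈ X, G.endMult e v := rfl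

lemma exists_ends_eq (e : G.E) : ∃ a b, G.ends e = s(a, b) := by
  obtain ⟨⟨a, b⟩, h⟩ := Quot.exists_rep (G.ends e)
  exact ⟨a, b, h.symm⟩

lemma endMult_eq {e : G.E} {a b : G.V} (h : G.ends e = s(a, b)) (v : G.V) :
    G.endMult e v = (if v = a then 1 else 0) + (if v = b then 1 else 0) := by
  unfold endMult
  rw [h]
  simp only [Sym2.eq_iff, Sym2.mem_iff]
  split_ifs <;> simp_all

lemma one_le_endMult {e : G.E} {v : G.V} (h : v ∈ G.ends e) : 1 ≤ G.endMult e v := by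
  unfold endMult
  split_ifs <;> simp_all

lemma endMult_eq_zero {e : G.E} {v : G.V} (h : v ∉ G.ends e) : G.endMult e v = 0 := by
  obtain ⟨a, b, hab⟩ := G.exists_ends_eq e
  rw [hab, Sym2.mem_iff, not_or] at h
  simp [endMult_eq hab, h.1, h.2]

lemma sum_endMult {e : G.E} {a b : G.V} (h : G.ends e = s(a, b)) (N : Finset G.V) :
    ∑ v ∈ N, G.endMult e v = (if a ∈ N then 1 else 0) + (if b ∈ N then 1 else 0) := by
  simp_rw [endMult_eq h, Finset.sum_add_distrib, Finset.sum_ite_eq']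

lemma sum_endMult_le_two (e : G.E) (N : Finset G.V) : ∑ v ∈ N, G.endMult e v ≤ 2 := by
  obtain ⟨a, b, hab⟩ := G.exists_ends_eq e
  rw [sum_endMult hab]
  split_ifs <;> simp

lemma mem_of_sum_endMult_eq_two {e : G.E} {N : Finset G.V}
    (h : ∑ v ∈ N, G.endMult e v = 2) {v : G.V} (hv : v ∈ G.ends e) : v ∈ N := by
  obtain ⟨a, b, hab⟩ := G.exists_ends_eq e
  rw [sum_endMult hab] at h
  rw [hab, Sym2.mem_iff] at hv
  rcases hv with rfl | rfl <;> split_ifs at h <;> first | assumption | omega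

lemma mem_supp_iff {X : Finset G.E} {v : G.V} : v ∈ G.supp X ↔ ∃ e ∈ X, v ∈ G.ends e := by
  simp [supp]

lemma mem_supp_of_mem_ends {X : Finset G.E} {e : G.E} {v : G.V} (he : e ∈ X)
    (hv : v ∈ G.ends e) : v ∈ G.supp X :=
  mem_supp_iff.2 ⟨e, he, hv⟩

lemma supp_mono {X Y : Finset G.E} (h : X ⊆ Y) : G.supp X ⊆ G.supp Y := fun _ hv =>
  let ⟨_, he, hve⟩ := mem_supp_iff.1 hv
  mem_supp_of_mem_ends (h he) hve

lemma supp_nonempty {X : Finset G.E} (h : X.Nonempty) : (G.supp X).Nonempty := by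
  obtain ⟨e, he⟩ := h
  obtain ⟨a, b, hab⟩ := G.exists_ends_eq e
  exact ⟨a, mem_supp_of_mem_ends he (hab ▸ Sym2.mem_mk_left a b)⟩

lemma supp_union (X Y : Finset G.E) : G.supp (X ∪ Y) = G.supp X ∪ G.supp Y := by
  ext v
  simp only [mem_supp_iff, Finset.mem_union, or_and_right, exists_or]

lemma supp_insert {X : Finset G.E} {f : G.E} {a b : G.V} (h : G.ends f = s(a, b)) :
    G.supp (insert f X) = insert a (insert b (G.supp X)) := by
  ext v
  simp only [mem_supp_iff, Finset.mem_insert, exists_eq_or_imp, h, Sym2.mem_iff, or_assoc]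

lemma one_le_degIn {X : Finset G.E} {v : G.V} (hv : v ∈ G.supp X) : 1 ≤ G.degIn X v := by
  obtain ⟨e, he, hve⟩ := mem_supp_iff.1 hv
  exact (one_le_endMult hve).trans
    (Finset.single_le_sum (f := (G.endMult · v)) (fun _ _ => Nat.zero_le _) he)

lemma degIn_eq_zero {X : Finset G.E} {v : G.V} (hv : v ∉ G.supp X) : G.degIn X v = 0 :=
  Finset.sum_eq_zero fun _ he => endMult_eq_zero fun hve => hv (mem_supp_of_mem_ends he hve)

lemma degIn_mono {X Y : Finset G.E} (h : X ⊆ Y) (v : G.V) : G.degIn X v ≤ G.degIn Y v :=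
  Finset.sum_le_sum_of_subset h

lemma eq_of_degIn_eq_one {X : Finset G.E} {v : G.V} (hdeg : G.degIn X v = 1) {e e' : G.E}
    (he : e ∈ X) (hve : v ∈ G.ends e) (he' : e' ∈ X) (hve' : v ∈ G.ends e') : e' = e := by
  by_contra hne
  have hpair := degIn_mono (Finset.insert_subset he' (Finset.singleton_subset_iff.2 he)) v
  rw [degIn_eq_sum_endMult, Finset.sum_pair hne] at hpair
  have := one_le_endMult hve
  have := one_le_endMult hve'
  omega

lemma IsLeaflessSet.two_le_degIn {Y : Finset G.E} (hY : G.IsLeaflessSet Y) {v : G.V}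
    (hv : v ∈ G.supp Y) : 2 ≤ G.degIn Y v := by
  have := one_le_degIn hv
  have := hY v hv
  omega

lemma IsCycleSet.isLeaflessSet {C : Finset G.E} (hC : G.IsCycleSet C) : G.IsLeaflessSet C :=
  fun v hv => by rw [hC.2 v hv]; decide

lemma sum_degIn_eq (W : Finset G.E) (N : Finset G.V) :
    ∑ v ∈ N, G.degIn W v = ∑ e ∈ W, ∑ v ∈ N, G.endMult e v :=
  Finset.sum_comm

lemma sum_degIn_le (W : Finset G.E) (N : Finset G.V) :
    ∑ v ∈ N, G.degIn W v ≤ 2 * W.card := by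
  rw [sum_degIn_eq, mul_comm, ← smul_eq_mul, ← Finset.sum_const]
  exact Finset.sum_le_sum fun e _ => G.sum_endMult_le_two e N

lemma two_mul_card_le_sum_degIn {W : Finset G.E} {N : Finset G.V}
    (hdeg : ∀ v ∈ N, 2 ≤ G.degIn W v) : 2 * N.card ≤ ∑ v ∈ N, G.degIn W v := by
  rw [mul_comm, ← smul_eq_mul, ← Finset.sum_const]
  exact Finset.sum_le_sum hdeg

lemma card_le_of_two_le_degIn {W : Finset G.E} {N : Finset G.V}
    (hdeg : ∀ v ∈ N, 2 ≤ G.degIn W v) : N.card ≤ W.card := by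
  have := two_mul_card_le_sum_degIn hdeg
  have := sum_degIn_le W N
  omega

lemma supp_subset_of_two_le_degIn {W : Finset G.E} {N : Finset G.V}
    (hdeg : ∀ v ∈ N, 2 ≤ G.degIn W v) (hcard : W.card ≤ N.card) : G.supp W ⊆ N := by
  have hsum : ∑ e ∈ W, ∑ v ∈ N, G.endMult e v = ∑ _e ∈ W, 2 := by
    have := two_mul_card_le_sum_degIn hdeg
    have := sum_degIn_le W N
    rw [sum_degIn_eq] at *
    rw [Finset.sum_const, smul_eq_mul]
    omega
  rw [Finset.sum_eq_sum_iff_of_le fun e _ => G.sum_endMult_le_two e N] at hsum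
  intro v hv
  obtain ⟨e, he, hve⟩ := mem_supp_iff.1 hv
  exact mem_of_sum_endMult_eq_two (hsum e he) hve

lemma delta_le_delta_insert {X : Finset G.E} {f : G.E} {a b : G.V} (hf : f ∉ X)
    (hab : G.ends f = s(a, b)) (ha : a ∈ G.supp X) : G.delta X ≤ G.delta (insert f X) := by
  have := Finset.card_insert_le b (G.supp X)
  unfold delta
  rw [Finset.card_insert_of_notMem hf, supp_insert hab,
    Finset.insert_eq_of_mem (Finset.mem_insert_of_mem ha)]
  push_cast
  omega

lemma delta_insert_of_mem_supp {X : Finset G.E} {f : G.E} {a b : G.V} (hf : f ∉ X)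
    (hab : G.ends f = s(a, b)) (ha : a ∈ G.supp X) (hb : b ∈ G.supp X) :
    G.delta (insert f X) = G.delta X + 1 := by
  unfold delta
  rw [Finset.card_insert_of_notMem hf, supp_insert hab, Finset.insert_eq_of_mem hb,
    Finset.insert_eq_of_mem ha]
  push_cast
  ring

lemma delta_le_delta_erase {X : Finset G.E} {e : G.E} {v : G.V} (he : e ∈ X)
    (hve : v ∈ G.ends e) (hdeg : G.degIn X v = 1) : G.delta X ≤ G.delta (X.erase e) := by
  have hsupp : G.supp (X.erase e) ⊆ (G.supp X).erase v := by
    intro w hw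
    obtain ⟨e', he', hwe'⟩ := mem_supp_iff.1 hw
    obtain ⟨hne, he'X⟩ := Finset.mem_erase.1 he'
    refine Finset.mem_erase.2 ⟨?_, mem_supp_of_mem_ends he'X hwe'⟩
    rintro rfl
    exact hne (eq_of_degIn_eq_one hdeg he hve he'X hwe')
  have := Finset.card_le_card hsupp
  rw [Finset.card_erase_of_mem (mem_supp_of_mem_ends he hve)] at this
  have := Finset.card_pos.2 (supp_nonempty ⟨e, he⟩)
  have := Finset.card_pos.2 ⟨e, he⟩
  unfold delta
  rw [Finset.card_erase_of_mem he]
  omega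

lemma exists_edge_leaving {X : Finset G.E} {u w : G.V} (hr : G.reachIn Finset.univ u w)
    (hu : u ∈ G.supp X) (hw : w ∉ G.supp X) :
    ∃ f ∉ X, ∃ a b, G.ends f = s(a, b) ∧ a ∈ G.supp X := by
  induction hr with
  | refl => exact absurd hu hw
  | @tail c w _ hcw ih =>
    obtain ⟨e, -, hcw⟩ := hcw
    by_cases hc : c ∈ G.supp X
    · exact ⟨e, fun heX => hw (mem_supp_of_mem_ends heX (hcw ▸ Sym2.mem_mk_right c w)),
        c, w, hcw, hc⟩
    · exact ih hc

lemma exists_edge_leaving_of_ne_univ (hconn : G.GConn) {X : Finset G.E} (hX : X.Nonempty)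
    (hXu : X ≠ Finset.univ) : ∃ f ∉ X, ∃ a b, G.ends f = s(a, b) ∧ a ∈ G.supp X := by
  obtain ⟨f, -, hf⟩ := Finset.exists_of_ssubset (Finset.ssubset_univ_iff.2 hXu)
  obtain ⟨a, b, hab⟩ := G.exists_ends_eq f
  by_cases ha : a ∈ G.supp X
  · exact ⟨f, hf, a, b, hab, ha⟩
  · obtain ⟨u, hu⟩ := supp_nonempty hX
    exact exists_edge_leaving (hconn.2 u a) hu ha

lemma supp_univ (hconn : G.GConn) (hE : (Finset.univ : Finset G.E).Nonempty) :
    G.supp Finset.univ = Finset.univ := by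
  refine Finset.eq_univ_of_forall fun v => ?_
  by_contra hv
  obtain ⟨u, hu⟩ := supp_nonempty hE
  obtain ⟨f, hf, -⟩ := exists_edge_leaving (hconn.2 u v) hu hv
  exact hf (Finset.mem_univ f)

lemma delta_univ (hconn : G.GConn) (hE : (Finset.univ : Finset G.E).Nonempty) :
    G.delta Finset.univ = G.deltaG := by
  rw [delta, deltaG, supp_univ hconn hE, Finset.card_univ, Finset.card_univ]

lemma delta_le_deltaG (hconn : G.GConn) {X : Finset G.E} (hX : X.Nonempty) :
    G.delta X ≤ G.deltaG := by
  induction X using WellFoundedGT.induction with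
  | _ X ih =>
    by_cases hXu : X = Finset.univ
    · subst hXu
      exact (delta_univ hconn hX).le
    obtain ⟨f, hf, a, b, hab, ha⟩ := exists_edge_leaving_of_ne_univ hconn hX hXu
    exact (delta_le_delta_insert hf hab ha).trans
      (ih _ (Finset.ssubset_insert hf) (Finset.insert_nonempty f X))

lemma delta_union_lt_deltaG (hconn : G.GConn) {X W : Finset G.E} (hX : X.Nonempty)
    (hW : W.Nonempty) (hdisj : Disjoint (G.supp X) (G.supp W)) :
    G.delta (X ∪ W) < G.deltaG := by
  induction X using WellFoundedGT.induction with
  | _ X ih =>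
    obtain ⟨u, hu⟩ := supp_nonempty hX
    obtain ⟨w, hw⟩ := supp_nonempty hW
    obtain ⟨f, hf, a, b, hab, ha⟩ :=
      exists_edge_leaving (hconn.2 u w) hu (Finset.disjoint_right.1 hdisj hw)
    have hfW : f ∉ W := fun hfW =>
      Finset.disjoint_left.1 hdisj ha (mem_supp_of_mem_ends hfW (hab ▸ Sym2.mem_mk_left a b))
    have hfXW : f ∉ X ∪ W := by simp [hf, hfW]
    have haXW : a ∈ G.supp (X ∪ W) := supp_mono Finset.subset_union_left ha
    by_cases hb : b ∈ G.supp (X ∪ W)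
    · have := delta_insert_of_mem_supp hfXW hab haXW hb
      have := delta_le_deltaG hconn (Finset.insert_nonempty f (X ∪ W))
      omega
    · have hdisj' : Disjoint (G.supp (insert f X)) (G.supp W) := by
        rw [supp_insert hab, Finset.disjoint_insert_left, Finset.disjoint_insert_left]
        exact ⟨Finset.disjoint_left.1 hdisj ha,
          fun hbW => hb (supp_mono Finset.subset_union_right hbW), hdisj⟩
      have := ih _ (Finset.ssubset_insert hf) (Finset.insert_nonempty f X) hdisj'
      rw [Finset.insert_union] at this
      exact (delta_le_delta_insert hfXW hab haXW).trans_lt this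

lemma IsLeaflessSet.notMem_of_degIn_eq_one {C X : Finset G.E} (hC : G.IsLeaflessSet C)
    (hCX : C ⊆ X) {v : G.V} (hdeg : G.degIn X v = 1) {e : G.E} (hve : v ∈ G.ends e) :
    e ∉ C := fun heC => by
  have := hC.two_le_degIn (mem_supp_of_mem_ends heC hve)
  have := degIn_mono hCX v
  omega

lemma IsLeaflessSet.exists_isLeaflessSet_delta_le {C X : Finset G.E}
    (hC : G.IsLeaflessSet C) (hCX : C ⊆ X) :
    ∃ L, C ⊆ L ∧ G.IsLeaflessSet L ∧ G.delta X ≤ G.delta L := by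
  induction X using WellFoundedLT.induction with
  | _ X ih =>
    by_cases hX : G.IsLeaflessSet X
    · exact ⟨X, hCX, hX, le_rfl⟩
    obtain ⟨v, hv, hdeg⟩ : ∃ v ∈ G.supp X, G.degIn X v = 1 := by
      simpa [IsLeaflessSet] using hX
    obtain ⟨e, he, hve⟩ := mem_supp_iff.1 hv
    have hCe : C ⊆ X.erase e :=
      Finset.subset_erase.2 ⟨hCX, hC.notMem_of_degIn_eq_one hCX hdeg hve⟩
    obtain ⟨L, hCL, hL, hXL⟩ := ih _ (Finset.erase_ssubset he) hCe
    exact ⟨L, hCL, hL, (delta_le_delta_erase he hve hdeg).trans hXL⟩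

lemma IsLeaflessSet.subset_of_delta_eq {X Y : Finset G.E} (hY : G.IsLeaflessSet Y)
    (hconn : G.GConn) (hX : X.Nonempty) (hXd : G.delta X = G.deltaG) : Y ⊆ X := by
  by_contra hYX
  set W := Y \ X
  have hW : W.Nonempty := Finset.sdiff_nonempty.2 hYX
  set N := G.supp W \ G.supp X
  have hdeg : ∀ v ∈ N, 2 ≤ G.degIn W v := by
    intro v hv
    obtain ⟨hvW, hvX⟩ := Finset.mem_sdiff.1 hv
    have hYXW : Y ⊆ X ∪ W := by
      rw [Finset.union_sdiff_self_eq_union]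
      exact Finset.subset_union_right
    calc 2 ≤ G.degIn Y v := hY.two_le_degIn (supp_mono Finset.sdiff_subset hvW)
      _ ≤ G.degIn (X ∪ W) v := degIn_mono hYXW v
      _ = G.degIn X v + G.degIn W v := Finset.sum_union Finset.disjoint_sdiff
      _ = G.degIn W v := by rw [degIn_eq_zero hvX, zero_add]
  have hcount : G.delta (X ∪ W) = G.delta X + W.card - N.card := by
    have : (G.supp X ∪ G.supp W).card = (G.supp X).card + N.card := by
      rw [← Finset.union_sdiff_self_eq_union, Finset.card_union_of_disjoint Finset.disjoint_sdiff]
    unfold delta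
    rw [supp_union, Finset.card_union_of_disjoint Finset.disjoint_sdiff, this]
    push_cast
    ring
  have hWN : W.card ≤ N.card := by
    have := delta_le_deltaG hconn (hX.mono (Finset.subset_union_left (s₂ := W)))
    omega
  have hdisj : Disjoint (G.supp X) (G.supp W) := Finset.disjoint_left.2 fun _ hvX hvW =>
    (Finset.mem_sdiff.1 (supp_subset_of_two_le_degIn hdeg hWN hvW)).2 hvX
  have := card_le_of_two_le_degIn hdeg
  have := delta_union_lt_deltaG hconn hX hW hdisj
  omega

end Multigraph

/-- For a connected graph `A` with a cycle, `Q_A = {X : A⟨X⟩ has no leaves}` has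
a unique maximum `M`, which equals the minimum of
`R_A = {X ≠ ∅ : Δ(A⟨X⟩) = Δ(A)}`, and every cycle of `A` lies in `M`. -/
theorem stmt_11 (A : Multigraph) (hconn : A.GConn) (hcyc : ∃ C, A.IsCycleSet C) :
    ∃ M : Finset A.E,
      ((∀ v ∈ A.supp M, A.degIn M v ≠ 1) ∧
        ∀ X : Finset A.E, (∀ v ∈ A.supp X, A.degIn X v ≠ 1) → X ⊆ M) ∧
      ((M.Nonempty ∧ A.delta M = A.deltaG) ∧
        ∀ X : Finset A.E, X.Nonempty → A.delta X = A.deltaG → M ⊆ X) ∧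
      ∀ C : Finset A.E, A.IsCycleSet C → C ⊆ M := by
  obtain ⟨C, hC⟩ := hcyc
  have hCne : C.Nonempty := hC.1.1
  obtain ⟨L, hCL, hL, hdelta⟩ :=
    hC.isLeaflessSet.exists_isLeaflessSet_delta_le (Finset.subset_univ C)
  have hLne : L.Nonempty := hCne.mono hCL
  have hLdelta : A.delta L = A.deltaG :=
    le_antisymm (Multigraph.delta_le_deltaG hconn hLne)
      (Multigraph.delta_univ hconn (hCne.mono (Finset.subset_univ C)) ▸ hdelta)
  exact ⟨L, ⟨hL, fun X hX => Multigraph.IsLeaflessSet.subset_of_delta_eq hX hconn hLne hLdelta⟩,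
    ⟨⟨hLne, hLdelta⟩, fun X hXne hX => hL.subset_of_delta_eq hconn hXne hX⟩,
    fun C' hC' => hC'.isLeaflessSet.subset_of_delta_eq hconn hLne hLdelta⟩
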